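/- arXiv:1604.07732 — 2 statements merged into one kernel-verified Lean document; each statement's English description precedes it below -/
import Mathlib

section
/- Let H, H_n be Hilbert subspaces of a Hilbert space H_0 with orthogonal projections P, P_n satisfying P_n → P strongly. Let A ∈ L(H), A_n ∈ L(H_n) with A_n P_n → A P strongly and A_n* P_n → A* P strongly. Then the sequence (A_n) is discretely compact if and only if (A_n* A_n) is discretely compact, if and only if (A_n*) is discretely compact. -/
open Filter Topology

/-!
Everything is transported to `H₀`: `A_n` and `A` become `T_n = A_n P_n` and `T = A P`, with
`T_n* = A_n* P_n`, and uniform boundedness gives `sup ‖T_n‖ < ∞`.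
The heart is `(A_n* A_n)` discretely compact ⇒ `(A_n)` discretely compact. Along an ultrafilter a
bounded `x_k` converges weakly to some `x₀`; then `T_k x_k ⇀ T x₀`, because
`⟪T_k x_k, w⟫ = ⟪x_k, T_k* w⟫`, and if `T_k* T_k x_k → z` then
`‖T_k x_k‖² = ⟪x_k, T_k* T_k x_k⟫ → ⟪x₀, z⟫ = ‖T x₀‖²`. Weak convergence together with convergence
of norms is strong convergence, and a subsequence is extracted from the cluster point.
Conversely `A_n x_n → y` forces `A_n* A_n x_n → A* y`. Finally `(A_n*)` is handled through
`(A_n*)* A_n* = A_n A_n*`, which inherits discrete compactness from `(A_n)` since `A_n*` is bounded.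
-/

/-- Stummel's notion of a **discretely compact sequence** of bounded operators
`A_n ∈ L(H_n)`, where `H, H_n` are closed subspaces of a Hilbert space `H₀`. -/
def DiscretelyCompact {H₀ : Type*} [NormedAddCommGroup H₀] [InnerProductSpace ℂ H₀]
    (H : Submodule ℂ H₀) (Hn : ℕ → Submodule ℂ H₀)
    (A : ∀ n, Hn n →L[ℂ] Hn n) : Prop :=
  ∀ φ : ℕ → ℕ, StrictMono φ →
    ∀ x : ∀ k, Hn (φ k), (∃ M : ℝ, ∀ k, ‖x k‖ ≤ M) →
      ∃ ψ : ℕ → ℕ, StrictMono ψ ∧ ∃ y ∈ H,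
        Tendsto (fun k => ((A (φ (ψ k)) (x (ψ k)) : H₀))) atTop (𝓝 y)

open InnerProductSpace ContinuousLinearMap

section Normed

variable {𝕜 E F ι : Type*} [NontriviallyNormedField 𝕜] [NormedAddCommGroup E] [NormedSpace 𝕜 E]
  [NormedAddCommGroup F] [NormedSpace 𝕜 F]

theorem exists_norm_le_of_tendsto_apply [CompleteSpace E] {T : ℕ → E →L[𝕜] F} {g : E → F}
    (hT : ∀ x, Tendsto (fun n => T n x) atTop (𝓝 (g x))) : ∃ C, ∀ n, ‖T n‖ ≤ C :=
  banach_steinhaus fun x =>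
    let ⟨C, hC⟩ := (hT x).norm.bddAbove_range
    ⟨C, fun n => hC ⟨n, rfl⟩⟩

theorem tendsto_apply_of_norm_le {l : Filter ι} {T : ι → E →L[𝕜] F} {C : ℝ} (hC : ∀ i, ‖T i‖ ≤ C)
    {c : ι → E} {c₀ : E} {y : F} (hT : Tendsto (fun i => T i c₀) l (𝓝 y))
    (hc : Tendsto c l (𝓝 c₀)) : Tendsto (fun i => T i (c i)) l (𝓝 y) := by
  have hsmall : Tendsto (fun i => T i (c i - c₀)) l (𝓝 0) := by
    refine squeeze_zero_norm (fun i => (T i).le_of_opNorm_le (hC i) _) ?_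
    simpa using ((tendsto_iff_norm_sub_tendsto_zero.1 hc).const_mul C)
  simpa using hsmall.add hT

end Normed

section Inner

variable {𝕜 E ι : Type*} [RCLike 𝕜] [NormedAddCommGroup E] [InnerProductSpace 𝕜 E]

local notation "⟪" x ", " y "⟫" => @inner 𝕜 _ _ x y

theorem exists_forall_tendsto_inner_of_norm_le [CompleteSpace E] (U : Ultrafilter ι)
    {a : ι → E} {R : ℝ} (ha : ∀ i, ‖a i‖ ≤ R) :
    ∃ a₀ : E, ∀ w, Tendsto (fun i => ⟪a i, w⟫) U (𝓝 ⟪a₀, w⟫) := by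
  let f : ι → WeakDual 𝕜 E := fun i => StrongDual.toWeakDual (toDual 𝕜 E (a i))
  have hf : (U.map f : Filter (WeakDual 𝕜 E)) ≤
      𝓟 (WeakDual.toStrongDual ⁻¹' Metric.closedBall (0 : StrongDual 𝕜 E) R) :=
    le_principal_iff.2 <| mem_map.2 <| univ_mem' fun i => by simpa [f] using ha i
  obtain ⟨g, -, hg⟩ :=
    (WeakDual.isCompact_closedBall (0 : StrongDual 𝕜 E) R).ultrafilter_le_nhds _ hf
  refine ⟨(toDual 𝕜 E).symm (WeakDual.toStrongDual g), fun w => ?_⟩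
  rw [toDual_symm_apply]
  exact ((WeakDual.eval_continuous w).tendsto g).comp hg

theorem tendsto_inner_of_norm_le {l : Filter ι} {a c : ι → E} {a₀ c₀ : E} {R : ℝ}
    (ha : ∀ i, ‖a i‖ ≤ R) (hw : Tendsto (fun i => ⟪a i, c₀⟫) l (𝓝 ⟪a₀, c₀⟫))
    (hc : Tendsto c l (𝓝 c₀)) : Tendsto (fun i => ⟪a i, c i⟫) l (𝓝 ⟪a₀, c₀⟫) :=
  tendsto_apply_of_norm_le (T := fun i => innerSL 𝕜 (a i))
    (fun i => (innerSL_apply_norm 𝕜 (a i)).le.trans (ha i)) hw hc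

theorem tendsto_of_tendsto_inner_of_tendsto_inner_self {l : Filter ι} {a : ι → E} {a₀ : E}
    (hw : Tendsto (fun i => ⟪a i, a₀⟫) l (𝓝 ⟪a₀, a₀⟫))
    (hn : Tendsto (fun i => ⟪a i, a i⟫) l (𝓝 ⟪a₀, a₀⟫)) : Tendsto a l (𝓝 a₀) := by
  have hw' : Tendsto (fun i => ⟪a₀, a i⟫) l (𝓝 ⟪a₀, a₀⟫) := by
    simpa only [Function.comp_def, inner_conj_symm] using
      (RCLike.continuous_conj.tendsto _).comp hw
  have hsq : Tendsto (fun i => ‖a i - a₀‖ ^ 2) l (𝓝 0) := by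
    have := (RCLike.continuous_re.tendsto _).comp (((hn.sub hw).sub hw').add_const ⟪a₀, a₀⟫)
    rw [Function.comp_def, show ⟪a₀, a₀⟫ - ⟪a₀, a₀⟫ - ⟪a₀, a₀⟫ + ⟪a₀, a₀⟫ = (0 : 𝕜) by ring,
      map_zero] at this
    refine this.congr fun i => ?_
    rw [← inner_self_eq_norm_sq (𝕜 := 𝕜), inner_sub_left, inner_sub_right, inner_sub_right]
    ring_nf
  rw [tendsto_iff_norm_sub_tendsto_zero]
  simpa [Function.comp_def, Real.sqrt_sq_eq_abs] using (Real.continuous_sqrt.tendsto 0).comp hsq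

theorem exists_subseq_tendsto_of_tendsto_adjoint_comp_self [CompleteSpace E]
    {T : ℕ → E →L[𝕜] E} {T₀ : E →L[𝕜] E}
    (hT : ∀ y, Tendsto (fun n => T n y) atTop (𝓝 (T₀ y)))
    (hT' : ∀ y, Tendsto (fun n => adjoint (T n) y) atTop (𝓝 (adjoint T₀ y)))
    {x : ℕ → E} {M : ℝ} (hx : ∀ k, ‖x k‖ ≤ M) {z : E}
    (hz : Tendsto (fun k => adjoint (T k) (T k (x k))) atTop (𝓝 z)) :
    ∃ ψ : ℕ → ℕ, StrictMono ψ ∧ ∃ x₀, Tendsto (fun k => T (ψ k) (x (ψ k))) atTop (𝓝 (T₀ x₀)) := by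
  obtain ⟨C, hC⟩ := exists_norm_le_of_tendsto_apply hT
  have hTx : ∀ k, ‖T k (x k)‖ ≤ C * M := fun k => (T k).le_of_opNorm_le_of_le (hC k) (hx k)
  set U := Ultrafilter.of (atTop : Filter ℕ)
  have hU : (U : Filter ℕ) ≤ atTop := Ultrafilter.of_le _
  obtain ⟨x₀, hx₀⟩ := exists_forall_tendsto_inner_of_norm_le (𝕜 := 𝕜) U hx
  have hweak : ∀ w, Tendsto (fun k => ⟪T k (x k), w⟫) U (𝓝 ⟪T₀ x₀, w⟫) := fun w => by
    simpa only [adjoint_inner_right] using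
      tendsto_inner_of_norm_le hx (hx₀ _) ((hT' w).mono_left hU)
  -- `⟪z, x₀⟫` is the limit of `⟪T k† T k (x k), x₀⟫ = ⟪T k (x k), T k x₀⟫ → ⟪T₀ x₀, T₀ x₀⟫`
  have hz₀ : ⟪x₀, z⟫ = ⟪T₀ x₀, T₀ x₀⟫ := by
    have h₁ := tendsto_inner_of_norm_le hTx (hweak _) ((hT x₀).mono_left hU)
    have h₂ := (hz.mono_left hU).inner (𝕜 := 𝕜) (tendsto_const_nhds (x := x₀))
    simp only [adjoint_inner_left] at h₂
    rw [← inner_conj_symm, tendsto_nhds_unique h₂ h₁, inner_conj_symm]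
  have hnorm : Tendsto (fun k => ⟪T k (x k), T k (x k)⟫) U (𝓝 ⟪T₀ x₀, T₀ x₀⟫) := by
    simpa only [adjoint_inner_right, hz₀] using
      tendsto_inner_of_norm_le hx (hx₀ z) (hz.mono_left hU)
  have hconv := tendsto_of_tendsto_inner_of_tendsto_inner_self (hweak _) hnorm
  obtain ⟨ψ, hψ, hlim⟩ := (hconv.mapClusterPt.mono (map_mono hU)).tendsto_subseq
  exact ⟨ψ, hψ, x₀, hlim⟩

end Inner

namespace Submodule

variable {𝕜 E : Type*} [RCLike 𝕜] [NormedAddCommGroup E] [InnerProductSpace 𝕜 E]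

noncomputable def extendByZero (K : Submodule 𝕜 E) [K.HasOrthogonalProjection] (B : K →L[𝕜] K) :
    E →L[𝕜] E :=
  K.subtypeL ∘L B ∘L K.orthogonalProjectionOnto

variable (K : Submodule 𝕜 E)

@[simp]
theorem extendByZero_apply [K.HasOrthogonalProjection] (B : K →L[𝕜] K) (y : E) :
    K.extendByZero B y = B (K.orthogonalProjectionOnto y) :=
  rfl

@[simp]
theorem extendByZero_apply_coe [K.HasOrthogonalProjection] (B : K →L[𝕜] K) (x : K) :
    K.extendByZero B x = B x := by
  simp

theorem extendByZero_mem [K.HasOrthogonalProjection] (B : K →L[𝕜] K) (y : E) :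
    K.extendByZero B y ∈ K :=
  coe_mem _

theorem norm_le_norm_extendByZero [K.HasOrthogonalProjection] (B : K →L[𝕜] K) :
    ‖B‖ ≤ ‖K.extendByZero B‖ :=
  B.opNorm_le_bound (norm_nonneg _) fun x => by
    simpa using (K.extendByZero B).le_opNorm x

theorem adjoint_extendByZero [CompleteSpace E] [CompleteSpace K] (B : K →L[𝕜] K) :
    adjoint (K.extendByZero B) = K.extendByZero (adjoint B) := by
  simp only [extendByZero, adjoint_comp, adjoint_subtypeL, adjoint_orthogonalProjectionOnto,
    ContinuousLinearMap.comp_assoc]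

end Submodule

open Submodule

/-- `A_n P_n → A P` strongly. -/
def StronglyApproximates {𝕜 E : Type*} [RCLike 𝕜] [NormedAddCommGroup E] [InnerProductSpace 𝕜 E]
    (H : Submodule 𝕜 E) (Hn : ℕ → Submodule 𝕜 E) [H.HasOrthogonalProjection]
    [∀ n, (Hn n).HasOrthogonalProjection] (A : H →L[𝕜] H) (An : ∀ n, Hn n →L[𝕜] Hn n) : Prop :=
  ∀ y, Tendsto (fun n => (Hn n).extendByZero (An n) y) atTop (𝓝 (H.extendByZero A y))

theorem StronglyApproximates.exists_norm_le {𝕜 E : Type*} [RCLike 𝕜] [NormedAddCommGroup E]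
    [InnerProductSpace 𝕜 E] [CompleteSpace E] {H : Submodule 𝕜 E} {Hn : ℕ → Submodule 𝕜 E}
    [H.HasOrthogonalProjection] [∀ n, (Hn n).HasOrthogonalProjection] {A : H →L[𝕜] H}
    {An : ∀ n, Hn n →L[𝕜] Hn n} (hA : StronglyApproximates H Hn A An) :
    ∃ C, ∀ n, ‖An n‖ ≤ C :=
  let ⟨C, hC⟩ := exists_norm_le_of_tendsto_apply hA
  ⟨C, fun n => (norm_le_norm_extendByZero _ _).trans (hC n)⟩

namespace DiscretelyCompact

variable {H₀ : Type*} [NormedAddCommGroup H₀] [InnerProductSpace ℂ H₀]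
  {H : Submodule ℂ H₀} {Hn : ℕ → Submodule ℂ H₀}

theorem comp_right {An B : ∀ n, Hn n →L[ℂ] Hn n} (h : DiscretelyCompact H Hn An) {C : ℝ}
    (hB : ∀ n, ‖B n‖ ≤ C) : DiscretelyCompact H Hn (fun n => An n ∘L B n) :=
  fun φ hφ x ⟨M, hM⟩ => h φ hφ (fun k => B (φ k) (x k))
    ⟨C * M, fun k => (B (φ k)).le_of_opNorm_le_of_le (hB _) (hM k)⟩

variable [CompleteSpace H₀] [CompleteSpace H] [∀ n, CompleteSpace (Hn n)]
  {A : H →L[ℂ] H} {An : ∀ n, Hn n →L[ℂ] Hn n}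

theorem adjoint_comp_self
    (hA' : StronglyApproximates H Hn (adjoint A) (fun n => adjoint (An n)))
    (h : DiscretelyCompact H Hn An) :
    DiscretelyCompact H Hn (fun n => adjoint (An n) ∘L An n) := by
  intro φ hφ x hx
  obtain ⟨ψ, hψ, y, -, hy⟩ := h φ hφ x hx
  obtain ⟨D, hD⟩ := exists_norm_le_of_tendsto_apply hA'
  refine ⟨ψ, hψ, H.extendByZero (adjoint A) y, extendByZero_mem _ _ _, ?_⟩
  simpa using tendsto_apply_of_norm_le (fun k => hD _)
    ((hA' y).comp (hφ.comp hψ).tendsto_atTop) hy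

theorem of_adjoint_comp_self (hA : StronglyApproximates H Hn A An)
    (hA' : StronglyApproximates H Hn (adjoint A) (fun n => adjoint (An n)))
    (h : DiscretelyCompact H Hn (fun n => adjoint (An n) ∘L An n)) :
    DiscretelyCompact H Hn An := by
  intro φ hφ x ⟨M, hM⟩
  obtain ⟨ψ, hψ, z, -, hz⟩ := h φ hφ x ⟨M, hM⟩
  have hm := (hφ.comp hψ).tendsto_atTop
  obtain ⟨ρ, hρ, x₀, hlim⟩ := exists_subseq_tendsto_of_tendsto_adjoint_comp_self
    (T := fun k => (Hn (φ (ψ k))).extendByZero (An (φ (ψ k)))) (x := fun k => (x (ψ k) : H₀))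
    (fun y => (hA y).comp hm)
    (fun y => by simpa only [adjoint_extendByZero, Function.comp_def] using (hA' y).comp hm)
    (fun k => hM (ψ k))
    (by simpa only [adjoint_extendByZero, extendByZero_apply_coe, comp_apply] using hz)
  exact ⟨ψ ∘ ρ, hψ.comp hρ, _, extendByZero_mem _ _ x₀, by simpa using hlim⟩

end DiscretelyCompact

theorem stmt6_general {H₀ : Type*} [NormedAddCommGroup H₀] [InnerProductSpace ℂ H₀]
    [CompleteSpace H₀] (H : Submodule ℂ H₀) (Hn : ℕ → Submodule ℂ H₀)
    [CompleteSpace H] [∀ n, CompleteSpace (Hn n)]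
    (A : H →L[ℂ] H) (An : ∀ n, Hn n →L[ℂ] Hn n)
    (hAs : ∀ y : H₀, Tendsto
      (fun n => ((An n (Submodule.orthogonalProjectionOnto (Hn n) y) : H₀))) atTop
      (𝓝 ((A (Submodule.orthogonalProjectionOnto H y) : H₀))))
    (hAadj : ∀ y : H₀, Tendsto
      (fun n => ((ContinuousLinearMap.adjoint (An n)
        (Submodule.orthogonalProjectionOnto (Hn n) y) : H₀))) atTop
      (𝓝 ((ContinuousLinearMap.adjoint A (Submodule.orthogonalProjectionOnto H y) : H₀)))) :
    (DiscretelyCompact H Hn An ↔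
      DiscretelyCompact H Hn
        (fun n => (ContinuousLinearMap.adjoint (An n)).comp (An n))) ∧
    (DiscretelyCompact H Hn An ↔
      DiscretelyCompact H Hn (fun n => ContinuousLinearMap.adjoint (An n))) := by
  have hA : StronglyApproximates H Hn A An := hAs
  have hA' : StronglyApproximates H Hn (adjoint A) (fun n => adjoint (An n)) := hAadj
  obtain ⟨C, hC⟩ := hA.exists_norm_le
  obtain ⟨D, hD⟩ := hA'.exists_norm_le
  refine ⟨⟨.adjoint_comp_self hA', .of_adjoint_comp_self hA hA'⟩, fun h => ?_, fun h => ?_⟩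
  · have hA'' : StronglyApproximates H Hn (adjoint (adjoint A))
        (fun n => adjoint (adjoint (An n))) := by
      simpa only [adjoint_adjoint] using hA
    exact .of_adjoint_comp_self hA' hA'' (by simpa only [adjoint_adjoint] using h.comp_right hD)
  · exact .of_adjoint_comp_self hA hA' (h.comp_right hC)

/-- **Discrete compactness of adjoints.** Let `H, H_n` be complete subspaces of
a Hilbert space `H₀` with orthogonal projections `P, P_n` satisfying
`P_n → P` strongly, and let `A ∈ L(H)`, `A_n ∈ L(H_n)` with `A_n P_n → A P` and
`A_n* P_n → A* P` strongly.  Then: `(A_n)` is discretely compact iff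
`(A_n* A_n)` is, iff `(A_n*)` is. -/
theorem stmt6 {H₀ : Type*} [NormedAddCommGroup H₀] [InnerProductSpace ℂ H₀]
    [CompleteSpace H₀] (H : Submodule ℂ H₀) (Hn : ℕ → Submodule ℂ H₀)
    [CompleteSpace H] [∀ n, CompleteSpace (Hn n)]
    (A : H →L[ℂ] H) (An : ∀ n, Hn n →L[ℂ] Hn n)
    (hPs : ∀ y : H₀, Tendsto (fun n => ((Submodule.orthogonalProjectionOnto (Hn n) y : H₀)))
      atTop (𝓝 ((Submodule.orthogonalProjectionOnto H y : H₀))))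
    (hAs : ∀ y : H₀, Tendsto
      (fun n => ((An n (Submodule.orthogonalProjectionOnto (Hn n) y) : H₀))) atTop
      (𝓝 ((A (Submodule.orthogonalProjectionOnto H y) : H₀))))
    (hAadj : ∀ y : H₀, Tendsto
      (fun n => ((ContinuousLinearMap.adjoint (An n)
        (Submodule.orthogonalProjectionOnto (Hn n) y) : H₀))) atTop
      (𝓝 ((ContinuousLinearMap.adjoint A (Submodule.orthogonalProjectionOnto H y) : H₀)))) :
    (DiscretelyCompact H Hn An ↔
      DiscretelyCompact H Hn
        (fun n => (ContinuousLinearMap.adjoint (An n)).comp (An n))) ∧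
    (DiscretelyCompact H Hn An ↔
      DiscretelyCompact H Hn (fun n => ContinuousLinearMap.adjoint (An n))) :=
  stmt6_general H Hn A An hAs hAadj
end

section
/- Let T ∈ C(E), T_n ∈ C(E_n) with T_n →gsr T. If λ lies in Δ_b((T_n)) ∩ ρ(T), then (T_n − λ)⁻¹ P_n → (T − λ)⁻¹ P strongly. Moreover, Δ_b((T_n)) ⊂ ℂ \ σ_app(T), where σ_app(T) is the approximate point spectrum of T. -/
open Filter Topology

/-- `R` is the resolvent `(T - l)⁻¹` of `T`, i.e. `l ∈ ρ(T)`. -/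
def IsResolvent {F : Type*} [NormedAddCommGroup F] [NormedSpace ℂ F]
    (T : F →ₗ.[ℂ] F) (l : ℂ) (R : F →L[ℂ] F) : Prop :=
  (∀ x : T.domain, R (T x - l • (x : F)) = (x : F)) ∧
  (∀ y : F, ∃ h : R y ∈ T.domain, T ⟨R y, h⟩ - l • R y = y)

/-- `l ∈ Δ_b((T_n)_n)`: eventually `l ∈ ρ(T_n)` with uniformly bounded
resolvents. -/
def InRegionOfBoundedness {E₀ : Type*} [NormedAddCommGroup E₀] [NormedSpace ℂ E₀]
    (En : ℕ → Submodule ℂ E₀) (Tn : ∀ n, En n →ₗ.[ℂ] En n) (l : ℂ) : Prop :=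
  ∃ n₀ : ℕ, ∃ M : ℝ, ∀ n, n₀ ≤ n → ∃ R : En n →L[ℂ] En n,
    IsResolvent (Tn n) l R ∧ ‖R‖ ≤ M

/-- `l` belongs to the approximate point spectrum `σ_app(T)`. -/
def InApproxPointSpectrum {F : Type*} [NormedAddCommGroup F] [NormedSpace ℂ F]
    (T : F →ₗ.[ℂ] F) (l : ℂ) : Prop :=
  ∀ ε : ℝ, 0 < ε → ∃ x : T.domain, ‖(x : F)‖ = 1 ∧ ‖T x - l • (x : F)‖ < ε

/-! If `T_n →gsr T`, the resolvents at `l₀` produce for each `x ∈ dom T` points `(xₙ, Tₙ xₙ)` of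
the graphs of the `Tₙ` converging to `(x, T x)`. For `l ∈ Δ_b((T_n))` the uniform bound
`‖(Tₙ - l)⁻¹‖ ≤ M` then passes to the limit as `‖x‖ ≤ M ‖(T - l) x‖`, which keeps `l` out of
`σ_app(T)`; applied to `xₙ - (Tₙ - l)⁻¹ vₙ` with `x = (T - l)⁻¹ v`, it gives
`(Tₙ - l)⁻¹ vₙ → (T - l)⁻¹ v` whenever `vₙ → v`. -/

section Resolvent

variable {F : Type*} [NormedAddCommGroup F] [NormedSpace ℂ F]
  {T : F →ₗ.[ℂ] F} {l : ℂ} {R : F →L[ℂ] F}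

theorem IsResolvent.unique {R' : F →L[ℂ] F} (hR : IsResolvent T l R)
    (hR' : IsResolvent T l R') : R = R' := by
  ext y
  obtain ⟨hy, hTy⟩ := hR'.2 y
  simpa [hTy] using hR.1 ⟨R' y, hy⟩

theorem IsResolvent.norm_sub_apply_le (hR : IsResolvent T l R) (x : T.domain) (v : F) :
    ‖(x : F) - R v‖ ≤ ‖R‖ * ‖T x - l • (x : F) - v‖ := by
  rw [← hR.1 x, ← map_sub, hR.1 x]
  exact R.le_opNorm _

theorem not_inApproxPointSpectrum_of_norm_le {M : ℝ}
    (hM : ∀ x : T.domain, ‖(x : F)‖ ≤ M * ‖T x - l • (x : F)‖) :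
    ¬ InApproxPointSpectrum T l := by
  intro happ
  obtain ⟨x, hx, hTx⟩ := happ (1 / (|M| + 1)) (by positivity)
  have : |M| * (1 / (|M| + 1)) < 1 := by
    rw [mul_one_div, div_lt_one (by positivity)]
    linarith
  nlinarith [hM x, le_abs_self M, abs_nonneg M, norm_nonneg (T x - l • (x : F))]

end Resolvent

def GraphApproximates {E₀ : Type*} [NormedAddCommGroup E₀] [NormedSpace ℂ E₀]
    {E : Submodule ℂ E₀} {En : ℕ → Submodule ℂ E₀}
    (Tn : ∀ n, En n →ₗ.[ℂ] En n) (T : E →ₗ.[ℂ] E) : Prop :=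
  ∀ x : T.domain, ∃ xn yn : ∀ n, En n,
    Tendsto (fun n => (xn n : E₀)) atTop (𝓝 ((x : E) : E₀)) ∧
    Tendsto (fun n => (yn n : E₀)) atTop (𝓝 ((T x : E) : E₀)) ∧
    ∀ᶠ n in atTop, ∃ h : xn n ∈ (Tn n).domain, Tn n ⟨xn n, h⟩ = yn n

section GraphApproximates

variable {E₀ : Type*} [NormedAddCommGroup E₀] [NormedSpace ℂ E₀]
  {E : Submodule ℂ E₀} {En : ℕ → Submodule ℂ E₀}
  {T : E →ₗ.[ℂ] E} {Tn : ∀ n, En n →ₗ.[ℂ] En n} {l : ℂ}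

/-- The approximants are `xₙ = Rₙ zₙ` with `zₙ → (T - l₀) x`. -/
theorem graphApproximates_of_tendsto_resolvent {l₀ : ℂ} {R₀ : E →L[ℂ] E}
    {Rn₀ : ∀ n, En n →L[ℂ] En n} (hR₀ : IsResolvent T l₀ R₀)
    (hRn₀ : ∀ᶠ n in atTop, IsResolvent (Tn n) l₀ (Rn₀ n))
    (hconv : ∀ z : E, ∃ zn : ∀ n, En n,
      Tendsto (fun n => (zn n : E₀)) atTop (𝓝 (z : E₀)) ∧
      Tendsto (fun n => (Rn₀ n (zn n) : E₀)) atTop (𝓝 (R₀ z : E₀))) :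
    GraphApproximates Tn T := by
  intro x
  obtain ⟨zn, hzn, hRzn⟩ := hconv (T x - l₀ • (x : E))
  rw [hR₀.1 x] at hRzn
  refine ⟨fun n => Rn₀ n (zn n), fun n => zn n + l₀ • Rn₀ n (zn n), hRzn, ?_, ?_⟩
  · have hTx : ((T x : E) : E₀) = ((T x - l₀ • (x : E) : E) : E₀) + l₀ • ((x : E) : E₀) := by
      push_cast
      abel
    rw [hTx]
    simpa using hzn.add (hRzn.const_smul l₀)
  · filter_upwards [hRn₀] with n hn
    obtain ⟨h, hTzn⟩ := hn.2 (zn n)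
    exact ⟨h, eq_add_of_sub_eq hTzn⟩

theorem GraphApproximates.exists_norm_le (hA : GraphApproximates Tn T)
    (hl : InRegionOfBoundedness En Tn l) :
    ∃ M : ℝ, ∀ x : T.domain, ‖(x : E)‖ ≤ M * ‖T x - l • (x : E)‖ := by
  obtain ⟨n₁, M, hM⟩ := hl
  refine ⟨M, fun x => ?_⟩
  obtain ⟨xn, yn, hxn, hyn, hdom⟩ := hA x
  have hbound : ∀ᶠ n in atTop,
      ‖(xn n : E₀)‖ ≤ M * ‖(yn n : E₀) - l • (xn n : E₀)‖ := by
    filter_upwards [hdom, eventually_ge_atTop n₁] with n ⟨h, hTxn⟩ hn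
    obtain ⟨R, hR, hRM⟩ := hM n hn
    have := hR.norm_sub_apply_le ⟨xn n, h⟩ 0
    rw [map_zero, sub_zero, sub_zero, hTxn] at this
    exact this.trans (mul_le_mul_of_nonneg_right hRM (norm_nonneg _))
  exact le_of_tendsto_of_tendsto hxn.norm
    ((hyn.sub (hxn.const_smul l)).norm.const_mul M) hbound

theorem GraphApproximates.tendsto_resolvent (hA : GraphApproximates Tn T)
    (hl : InRegionOfBoundedness En Tn l) {R : E →L[ℂ] E} (hR : IsResolvent T l R)
    {Rn : ∀ n, En n →L[ℂ] En n} (hRn : ∀ᶠ n in atTop, IsResolvent (Tn n) l (Rn n))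
    {v : E} {vn : ∀ n, En n} (hvn : Tendsto (fun n => (vn n : E₀)) atTop (𝓝 (v : E₀))) :
    Tendsto (fun n => (Rn n (vn n) : E₀)) atTop (𝓝 (R v : E₀)) := by
  obtain ⟨n₁, M, hM⟩ := hl
  obtain ⟨hv, hTv⟩ := hR.2 v
  obtain ⟨xn, yn, hxn, hyn, hdom⟩ := hA ⟨R v, hv⟩
  have hbound : ∀ᶠ n in atTop, ‖(xn n : E₀) - Rn n (vn n)‖ ≤
      M * ‖(yn n : E₀) - l • (xn n : E₀) - vn n‖ := by
    filter_upwards [hdom, hRn, eventually_ge_atTop n₁] with n ⟨h, hTxn⟩ hRn hn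
    obtain ⟨R', hR', hR'M⟩ := hM n hn
    rw [hRn.unique hR']
    have := hR'.norm_sub_apply_le ⟨xn n, h⟩ (vn n)
    rw [hTxn] at this
    exact this.trans (mul_le_mul_of_nonneg_right hR'M (norm_nonneg _))
  -- the right-hand side tends to `M * ‖(T - l) (R v) - v‖ = 0`
  have hlim := ((hyn.sub (hxn.const_smul l)).sub hvn).norm.const_mul M
  push_cast at hlim
  rw [← Submodule.coe_smul, ← Submodule.coe_sub, hTv, sub_self, norm_zero, mul_zero] at hlim
  simpa using hxn.sub (squeeze_zero_norm' hbound hlim)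

end GraphApproximates

theorem stmt16_general {E₀ : Type*} [NormedAddCommGroup E₀] [NormedSpace ℂ E₀]
    (E : Submodule ℂ E₀) (En : ℕ → Submodule ℂ E₀)
    (P : E₀ →L[ℂ] E) (Pn : ∀ n, E₀ →L[ℂ] En n)
    (hP : ∀ x : E, P (x : E₀) = x)
    (hPs : ∀ y : E₀, Tendsto (fun n => ((Pn n y : E₀))) atTop (𝓝 ((P y : E₀))))
    (T : E →ₗ.[ℂ] E) (Tn : ∀ n, En n →ₗ.[ℂ] En n)
    (hgsr : ∃ (n₀ : ℕ) (l₀ : ℂ) (R₀ : E →L[ℂ] E)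
        (Rn₀ : ∀ n, En n →L[ℂ] En n),
      IsResolvent T l₀ R₀ ∧ (∀ n, n₀ ≤ n → IsResolvent (Tn n) l₀ (Rn₀ n)) ∧
      ∀ y : E₀, Tendsto (fun n => ((Rn₀ n (Pn n y) : E₀))) atTop
        (𝓝 ((R₀ (P y) : E₀)))) :
    (∀ l : ℂ, InRegionOfBoundedness En Tn l → ¬ InApproxPointSpectrum T l) ∧
    (∀ l : ℂ, InRegionOfBoundedness En Tn l →
      ∀ R : E →L[ℂ] E, IsResolvent T l R →
      ∀ (n₀ : ℕ) (Rn : ∀ n, En n →L[ℂ] En n),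
        (∀ n, n₀ ≤ n → IsResolvent (Tn n) l (Rn n)) →
        ∀ y : E₀, Tendsto (fun n => ((Rn n (Pn n y) : E₀))) atTop
          (𝓝 ((R (P y) : E₀)))) := by
  obtain ⟨n₀, l₀, R₀, Rn₀, hR₀, hRn₀, hconv⟩ := hgsr
  have hA : GraphApproximates Tn T :=
    graphApproximates_of_tendsto_resolvent hR₀ (eventually_atTop.2 ⟨n₀, hRn₀⟩) fun z =>
      ⟨fun n => Pn n z, by simpa [hP] using hPs z, by simpa [hP] using hconv z⟩
  refine ⟨fun l hl => ?_, fun l hl R hR n₁ Rn hRn y => ?_⟩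
  · obtain ⟨M, hM⟩ := hA.exists_norm_le hl
    exact not_inApproxPointSpectrum_of_norm_le hM
  · exact hA.tendsto_resolvent hl hR (eventually_atTop.2 ⟨n₁, hRn⟩) (hPs y)

/-- **Resolvents converge on the region of boundedness.**  Suppose
`T_n →gsr T`.  Then `Δ_b((T_n)) ⊆ ℂ \ σ_app(T)`, and for every
`λ ∈ Δ_b((T_n)) ∩ ρ(T)` one has `(T_n − λ)⁻¹ P_n → (T − λ)⁻¹ P` strongly. -/
theorem stmt16 {E₀ : Type*} [NormedAddCommGroup E₀] [NormedSpace ℂ E₀]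
    (E : Submodule ℂ E₀) (En : ℕ → Submodule ℂ E₀)
    (hE : IsClosed (E : Set E₀)) (hEn : ∀ n, IsClosed ((En n : Set E₀)))
    (P : E₀ →L[ℂ] E) (Pn : ∀ n, E₀ →L[ℂ] En n)
    (hP : ∀ x : E, P (x : E₀) = x) (hPn : ∀ n, ∀ x : En n, Pn n (x : E₀) = x)
    (hPs : ∀ y : E₀, Tendsto (fun n => ((Pn n y : E₀))) atTop (𝓝 ((P y : E₀))))
    (T : E →ₗ.[ℂ] E) (Tn : ∀ n, En n →ₗ.[ℂ] En n)
    (hT : IsClosed (T.graph : Set (E × E)))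
    (hTn : ∀ n, IsClosed ((Tn n).graph : Set (En n × En n)))
    (hgsr : ∃ (n₀ : ℕ) (l₀ : ℂ) (R₀ : E →L[ℂ] E)
        (Rn₀ : ∀ n, En n →L[ℂ] En n),
      IsResolvent T l₀ R₀ ∧ (∀ n, n₀ ≤ n → IsResolvent (Tn n) l₀ (Rn₀ n)) ∧
      ∀ y : E₀, Tendsto (fun n => ((Rn₀ n (Pn n y) : E₀))) atTop
        (𝓝 ((R₀ (P y) : E₀)))) :
    (∀ l : ℂ, InRegionOfBoundedness En Tn l → ¬ InApproxPointSpectrum T l) ∧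
    (∀ l : ℂ, InRegionOfBoundedness En Tn l →
      ∀ R : E →L[ℂ] E, IsResolvent T l R →
      ∀ (n₀ : ℕ) (Rn : ∀ n, En n →L[ℂ] En n),
        (∀ n, n₀ ≤ n → IsResolvent (Tn n) l (Rn n)) →
        ∀ y : E₀, Tendsto (fun n => ((Rn n (Pn n y) : E₀))) atTop
          (𝓝 ((R (P y) : E₀)))) :=
  stmt16_general E En P Pn hP hPs T Tn hgsr
end
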